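/- arXiv:0806.1390 — 3 statements merged into one kernel-verified Lean document; each statement's English description precedes it below -/
import Mathlib

section
/- In every Steiner t-(v, t+1) trade T = {T_1, T_2} of volume s, every element x of found(T) satisfies 2·r_x ≤ s. -/
/-!
Double counting the `t`-subsets that contain a fixed set `S` shows that a `t`-trade is also an
`i`-trade for every `i ≤ t`; for `S = ∅` and `S = {x}` this gives `|T₁| = |T₂|` and
`r_x(T₁) = r_x(T₂)`. If `B ∈ T₁` contains `x`, the `t`-set `B ∖ {x}` lies in some block `B'` of
`T₂`, and `x ∉ B'` because the two sides share no block. Two blocks of `T₁` through `x` with the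
same `B'` would meet in `t` points, which the Steiner property forbids. So `B ↦ B'` is injective,
and `r_x(T₁) ≤ |T₂| - r_x(T₂) = s - r_x(T₁)`.
-/

/-- `T1, T2` form a `t`-`(v,k)` trade on the ground type `α` (the `v`-set):
two multisets of `k`-element blocks with no block in common, of positive
volume, such that every `t`-subset is contained in the same number of blocks
of `T1` as of `T2`. -/
def IsTrade {α : Type} [DecidableEq α] (t k : ℕ) (T1 T2 : Multiset (Finset α)) : Prop :=
  (∀ B ∈ T1, B.card = k) ∧
  (∀ B ∈ T2, B.card = k) ∧
  (∀ B ∈ T1, B ∉ T2) ∧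
  T1 ≠ 0 ∧
  ∀ A : Finset α, A.card = t →
    Multiset.countP (fun B => A ⊆ B) T1 = Multiset.countP (fun B => A ⊆ B) T2

/-- A Steiner trade: every `t`-subset appears in at most one block of each side. -/
def IsSteinerTrade {α : Type} [DecidableEq α] (t k : ℕ) (T1 T2 : Multiset (Finset α)) : Prop :=
  IsTrade t k T1 T2 ∧
  ∀ A : Finset α, A.card = t →
    Multiset.countP (fun B => A ⊆ B) T1 ≤ 1 ∧ Multiset.countP (fun B => A ⊆ B) T2 ≤ 1

/-- The foundation of a trade: all points covered by some block. -/
def foundation {α : Type} [DecidableEq α] (T1 T2 : Multiset (Finset α)) : Finset α :=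
  (T1 + T2).toFinset.biUnion id

/-- `rx T1 x`: the number of blocks of `T1` containing `x`. -/
def rx {α : Type} [DecidableEq α] (T1 : Multiset (Finset α)) (x : α) : ℕ :=
  Multiset.countP (fun B => x ∈ B) T1

/-- `lamxy T1 x y`: the number of blocks of `T1` containing both `x` and `y`. -/
def lamxy {α : Type} [DecidableEq α] (T1 : Multiset (Finset α)) (x y : α) : ℕ :=
  Multiset.countP (fun B => x ∈ B ∧ y ∈ B) T1


open Finset

section Counting

variable {α : Type*} [DecidableEq α]

lemma Finset.card_add_card_le_card_add_card_inter {x : α} {B₁ B₂ C : Finset α}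
    (hx₁ : x ∈ B₁) (hx₂ : x ∈ B₂) (h₁ : B₁.erase x ⊆ C) (h₂ : B₂.erase x ⊆ C) :
    #B₁ + #B₂ ≤ #C + #(B₁ ∩ B₂) + 1 := by
  have hinter : B₁.erase x ∩ B₂.erase x = (B₁ ∩ B₂).erase x := by
    rw [erase_inter, inter_erase, erase_idem]
  have hunion := card_union_add_card_inter (B₁.erase x) (B₂.erase x)
  rw [hinter, card_erase_of_mem hx₁, card_erase_of_mem hx₂,
    card_erase_of_mem (mem_inter.2 ⟨hx₁, hx₂⟩)] at hunion
  have := card_le_card (union_subset h₁ h₂)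
  have := card_pos.2 ⟨x, hx₁⟩
  have := card_pos.2 ⟨x, mem_inter.2 ⟨hx₁, hx₂⟩⟩
  omega

lemma Finset.card_filter_superset_subset [Fintype α] {S : Finset α} {t : ℕ} (hS : #S ≤ t)
    (B : Finset α) :
    #{A ∈ {A ∈ univ.powersetCard t | S ⊆ A} | A ⊆ B} =
      if S ⊆ B then (#B - #S).choose (t - #S) else 0 := by
  split_ifs with hSB
  · rw [← card_filter_powersetCard_subset S B t hSB hS]
    congr 1
    ext A
    simp only [mem_filter, mem_powersetCard, subset_univ, true_and]
    tauto
  · rw [card_eq_zero, filter_eq_empty_iff]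
    exact fun A hA hAB => hSB (((mem_filter.1 hA).2).trans hAB)

lemma sum_countP_superset [Fintype α] {k t : ℕ} {T : Multiset (Finset α)}
    (hT : ∀ B ∈ T, #B = k) {S : Finset α} (hS : #S ≤ t) :
    ∑ A ∈ univ.powersetCard t with S ⊆ A, T.countP (A ⊆ ·) =
      (k - #S).choose (t - #S) * T.countP (S ⊆ ·) := by
  induction T using Multiset.induction with
  | empty => simp
  | cons B T ih =>
    have hB := hT B (Multiset.mem_cons_self B T)
    simp only [Multiset.countP_cons, sum_add_distrib, sum_boole, Nat.cast_id,
      card_filter_superset_subset hS, hB, ih fun C hC => hT C (Multiset.mem_cons_of_mem hC)]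
    split_ifs <;> ring

lemma Multiset.nodup_of_countP_subset_le_one {t : ℕ} {T : Multiset (Finset α)}
    (hS : ∀ A : Finset α, #A = t → T.countP (A ⊆ ·) ≤ 1) (hT : ∀ B ∈ T, t ≤ #B) : T.Nodup := by
  rw [Multiset.nodup_iff_count_le_one]
  intro B
  by_cases hB : B ∈ T
  · obtain ⟨A, hAB, hA⟩ := exists_subset_card_eq (hT B hB)
    calc Multiset.count B T = Multiset.card (T.filter (B = ·)) := Multiset.countP_eq_card_filter ..
      _ ≤ Multiset.card (T.filter (A ⊆ ·)) :=
        Multiset.card_le_card (Multiset.monotone_filter_right T fun C hC => hC ▸ hAB)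
      _ = T.countP (A ⊆ ·) := (Multiset.countP_eq_card_filter ..).symm
      _ ≤ 1 := hS A hA
  · simp [Multiset.count_eq_zero_of_notMem hB]

lemma Multiset.eq_of_le_card_inter_of_countP_subset_le_one {t : ℕ} {T : Multiset (Finset α)}
    (hS : ∀ A : Finset α, #A = t → T.countP (A ⊆ ·) ≤ 1) {B₁ B₂ : Finset α}
    (h₁ : B₁ ∈ T) (h₂ : B₂ ∈ T) (h : t ≤ #(B₁ ∩ B₂)) : B₁ = B₂ := by
  obtain ⟨A, hA, hAcard⟩ := exists_subset_card_eq h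
  have hmem₁ : B₁ ∈ T.filter (A ⊆ ·) := Multiset.mem_filter.2 ⟨h₁, hA.trans inter_subset_left⟩
  have hmem₂ : B₂ ∈ T.filter (A ⊆ ·) := Multiset.mem_filter.2 ⟨h₂, hA.trans inter_subset_right⟩
  have hle : Multiset.card (T.filter (A ⊆ ·)) ≤ 1 :=
    Multiset.countP_eq_card_filter (A ⊆ ·) T ▸ hS A hAcard
  obtain ⟨C, hC⟩ := Multiset.card_eq_one.1
    (le_antisymm hle (Multiset.card_pos_iff_exists_mem.2 ⟨_, hmem₁⟩))
  rw [hC, Multiset.mem_singleton] at hmem₁ hmem₂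
  exact hmem₁.trans hmem₂.symm

end Counting

section Trade

variable {α : Type} [DecidableEq α] {t k : ℕ} {T₁ T₂ : Multiset (Finset α)}

theorem IsTrade.countP_superset_eq [Fintype α] (h : IsTrade t k T₁ T₂) (htk : t ≤ k)
    {S : Finset α} (hS : #S ≤ t) :
    T₁.countP (S ⊆ ·) = T₂.countP (S ⊆ ·) := by
  have hsum : ∑ A ∈ univ.powersetCard t with S ⊆ A, T₁.countP (A ⊆ ·) =
      ∑ A ∈ univ.powersetCard t with S ⊆ A, T₂.countP (A ⊆ ·) :=
    sum_congr rfl fun A hA => h.2.2.2.2 A (mem_powersetCard.1 (mem_filter.1 hA).1).2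
  rw [sum_countP_superset h.1 hS, sum_countP_superset h.2.1 hS] at hsum
  exact Nat.eq_of_mul_eq_mul_left (Nat.choose_pos (by omega)) hsum

theorem IsTrade.card_eq [Fintype α] (h : IsTrade t k T₁ T₂) (htk : t ≤ k) :
    Multiset.card T₁ = Multiset.card T₂ := by
  simpa using h.countP_superset_eq htk (S := ∅) (by simp)

theorem IsTrade.rx_eq [Fintype α] (h : IsTrade t k T₁ T₂) (ht : 0 < t) (htk : t ≤ k) (x : α) :
    rx T₁ x = rx T₂ x := by
  simpa [rx] using h.countP_superset_eq htk (S := {x}) (by simpa)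

theorem IsTrade.exists_erase_subset (h : IsTrade t (t + 1) T₁ T₂) {B : Finset α} (hB : B ∈ T₁)
    {x : α} (hx : x ∈ B) : ∃ B' ∈ T₂, x ∉ B' ∧ B.erase x ⊆ B' := by
  have hcard : #(B.erase x) = t := by rw [card_erase_of_mem hx, h.1 B hB, Nat.add_sub_cancel]
  obtain ⟨B', hB', hsub⟩ : ∃ B' ∈ T₂, B.erase x ⊆ B' := by
    rw [← Multiset.countP_pos, ← h.2.2.2.2 _ hcard]
    exact Multiset.countP_pos_of_mem hB (erase_subset x B)
  refine ⟨B', hB', fun hxB' => h.2.2.1 B hB ?_, hsub⟩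
  have hBB' : B ⊆ B' := insert_erase hx ▸ insert_subset hxB' hsub
  rwa [eq_of_subset_of_card_le hBB' (by rw [h.1 B hB, h.2.1 B' hB'])]

theorem IsSteinerTrade.rx_le_countP_not_mem (hT : IsSteinerTrade t (t + 1) T₁ T₂) (x : α) :
    rx T₁ x ≤ T₂.countP (x ∉ ·) := by
  obtain ⟨hTrade, hSteiner⟩ := hT
  have hS₁ : ∀ A : Finset α, #A = t → T₁.countP (A ⊆ ·) ≤ 1 := fun A hA => (hSteiner A hA).1
  have hnodup : T₁.Nodup :=
    Multiset.nodup_of_countP_subset_le_one hS₁ fun B hB => (Nat.le_succ t).trans (hTrade.1 B hB).ge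
  calc rx T₁ x = #{B ∈ T₁.toFinset | x ∈ B} := by
        rw [rx, Multiset.countP_eq_card_filter, ← Multiset.toFinset_filter,
          Multiset.toFinset_card_of_nodup (hnodup.filter _)]
    _ ≤ #{B ∈ T₂.toFinset | x ∉ B} := by
        refine card_le_card_of_forall_subsingleton (fun B B' => B.erase x ⊆ B') ?_ ?_
        · intro B hB
          simp only [mem_filter, Multiset.mem_toFinset] at hB ⊢
          obtain ⟨B', hB', hxB', hsub⟩ := hTrade.exists_erase_subset hB.1 hB.2
          exact ⟨B', ⟨hB', hxB'⟩, hsub⟩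
        · intro B' hB' B₁ hB₁ B₂ hB₂
          simp only [Set.mem_ofPred_eq, mem_filter, Multiset.mem_toFinset] at hB' hB₁ hB₂
          refine Multiset.eq_of_le_card_inter_of_countP_subset_le_one hS₁ hB₁.1.1 hB₂.1.1 ?_
          have := card_add_card_le_card_add_card_inter hB₁.1.2 hB₂.1.2 hB₁.2 hB₂.2
          rw [hTrade.1 _ hB₁.1.1, hTrade.1 _ hB₂.1.1, hTrade.2.1 _ hB'.1] at this
          omega
    _ ≤ T₂.countP (x ∉ ·) := by
        rw [Multiset.countP_eq_card_filter, ← Multiset.toFinset_filter]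
        exact Multiset.toFinset_card_le _

end Trade

theorem steiner_rx_le_half_vol_general (v t s : ℕ) (ht : 0 < t)
    (T1 T2 : Multiset (Finset (Fin v))) (hT : IsSteinerTrade t (t + 1) T1 T2)
    (hs : Multiset.card T1 = s)
    (x : Fin v) :
    2 * rx T1 x ≤ s := by
  calc 2 * rx T1 x = rx T1 x + rx T2 x := by rw [hT.1.rx_eq ht (by omega) x, two_mul]
    _ ≤ T2.countP (x ∉ ·) + T2.countP (x ∈ ·) := add_le_add (hT.rx_le_countP_not_mem x) le_rfl
    _ = Multiset.card T2 := by rw [add_comm, ← Multiset.card_eq_countP_add_countP]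
    _ = s := by rw [← hT.1.card_eq (by omega), hs]

/-- In every Steiner `t`-`(v, t+1)` trade of volume `s`, every element `x` of the
foundation satisfies `2 * r_x ≤ s`. -/
theorem steiner_rx_le_half_vol (v t s : ℕ) (ht : 0 < t) (hv : t + 1 < v)
    (T1 T2 : Multiset (Finset (Fin v))) (hT : IsSteinerTrade t (t + 1) T1 T2)
    (hs : Multiset.card T1 = s)
    (x : Fin v) (hx : x ∈ foundation T1 T2) :
    2 * rx T1 x ≤ s :=
  steiner_rx_le_half_vol_general v t s ht T1 T2 hT hs x
end

section
/- Let T = {T_1, T_2} be a t-(v,k) trade with t ≥ 2 and let x, y ∈ found(T). Then every (t-1)-subset of X is contained in the same number of blocks of the multiset T_1 + T_{2x} + T_{2y} as of the multiset T_2 + T_{1x} + T_{1y} (multiset sums, counting multiplicities). -/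
section DoubleCounting

variable {α : Type} [DecidableEq α] [Fintype α]

lemma Finset.filter_compl_insert_subset (A B : Finset α) :
    {z ∈ Aᶜ | insert z A ⊆ B} = if A ⊆ B then B \ A else ∅ := by
  ext z
  split_ifs with hAB <;> simp [Finset.insert_subset_iff, hAB, and_comm]

lemma Multiset.sum_compl_countP_insert_subset {k : ℕ} (A : Finset α)
    (s : Multiset (Finset α)) (hs : ∀ B ∈ s, B.card = k) :
    ∑ z ∈ Aᶜ, s.countP (fun B => insert z A ⊆ B) = (k - A.card) * s.countP (fun B => A ⊆ B) := by
  induction s using Multiset.induction_on with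
  | empty => simp
  | cons B s ih =>
    have hB : B.card = k := hs B (Multiset.mem_cons_self B s)
    simp only [Multiset.countP_cons, Finset.sum_add_distrib, Finset.sum_boole,
      Finset.filter_compl_insert_subset, Nat.cast_id]
    rw [ih fun C hC => hs C (Multiset.mem_cons_of_mem hC)]
    split_ifs with hAB
    · rw [Finset.card_sdiff_of_subset hAB, hB, Nat.mul_succ]
    · simp

end DoubleCounting

namespace IsTrade

variable {α : Type} [DecidableEq α] [Fintype α] {t k : ℕ} {T1 T2 : Multiset (Finset α)}

lemma countP_subset_eq_of_card_eq_pred (hT : IsTrade t k T1 T2) (ht : 1 ≤ t) (htk : t ≤ k)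
    (A : Finset α) (hA : A.card = t - 1) :
    T1.countP (fun B => A ⊆ B) = T2.countP (fun B => A ⊆ B) := by
  obtain ⟨hT1, hT2, -, -, hbal⟩ := hT
  have hsum : ∑ z ∈ Aᶜ, T1.countP (fun B => insert z A ⊆ B)
      = ∑ z ∈ Aᶜ, T2.countP (fun B => insert z A ⊆ B) := by
    refine Finset.sum_congr rfl fun z hz => hbal _ ?_
    rw [Finset.card_insert_of_notMem (Finset.mem_compl.mp hz), hA]
    omega
  rw [Multiset.sum_compl_countP_insert_subset A T1 hT1,
    Multiset.sum_compl_countP_insert_subset A T2 hT2] at hsum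
  exact Nat.eq_of_mul_eq_mul_left (by omega) hsum

lemma countP_subset_filter_mem_eq (hT : IsTrade t k T1 T2) (ht : 1 ≤ t) (htk : t ≤ k)
    (A : Finset α) (hA : A.card = t - 1) (x : α) :
    (T1.filter (fun B => x ∈ B)).countP (fun B => A ⊆ B)
      = (T2.filter (fun B => x ∈ B)).countP (fun B => A ⊆ B) := by
  simp only [Multiset.countP_filter]
  by_cases hxA : x ∈ A
  · have hA_x : ∀ B : Finset α, (A ⊆ B ∧ x ∈ B) ↔ A ⊆ B := fun B => ⟨And.left, fun h => ⟨h, h hxA⟩⟩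
    simp only [hA_x]
    exact hT.countP_subset_eq_of_card_eq_pred ht htk A hA
  · have hA_x : ∀ B : Finset α, (A ⊆ B ∧ x ∈ B) ↔ insert x A ⊆ B := fun B => by
      rw [Finset.insert_subset_iff, and_comm]
    simp only [hA_x]
    exact hT.2.2.2.2 _ (by rw [Finset.card_insert_of_notMem hxA, hA]; omega)

end IsTrade

theorem trade_minus_Tx_Ty_general (v t k : ℕ) (ht : 2 ≤ t) (htk : t < k)
    (T1 T2 : Multiset (Finset (Fin v))) (hT : IsTrade t k T1 T2)
    (x y : Fin v)
    (A : Finset (Fin v)) (hA : A.card = t - 1) :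
    Multiset.countP (fun B => A ⊆ B)
        (T1 + T2.filter (fun B => x ∈ B) + T2.filter (fun B => y ∈ B)) =
      Multiset.countP (fun B => A ⊆ B)
        (T2 + T1.filter (fun B => x ∈ B) + T1.filter (fun B => y ∈ B)) := by
  have ht1 : 1 ≤ t := by omega
  simp only [Multiset.countP_add]
  rw [hT.countP_subset_eq_of_card_eq_pred ht1 htk.le A hA,
    hT.countP_subset_filter_mem_eq ht1 htk.le A hA x,
    hT.countP_subset_filter_mem_eq ht1 htk.le A hA y]

/-- For a `t`-`(v,k)` trade `T` with `t ≥ 2` and `x, y` in the foundation, every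
`(t-1)`-subset is contained in the same number of blocks of `T1 + T_{2x} + T_{2y}` as of
`T2 + T_{1x} + T_{1y}`. -/
theorem trade_minus_Tx_Ty (v t k : ℕ) (ht : 2 ≤ t) (htk : t < k) (hkv : k < v)
    (T1 T2 : Multiset (Finset (Fin v))) (hT : IsTrade t k T1 T2)
    (x y : Fin v) (hx : x ∈ foundation T1 T2) (hy : y ∈ foundation T1 T2)
    (A : Finset (Fin v)) (hA : A.card = t - 1) :
    Multiset.countP (fun B => A ⊆ B)
        (T1 + T2.filter (fun B => x ∈ B) + T2.filter (fun B => y ∈ B)) =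
      Multiset.countP (fun B => A ⊆ B)
        (T2 + T1.filter (fun B => x ∈ B) + T1.filter (fun B => y ∈ B)) :=
  trade_minus_Tx_Ty_general v t k ht htk T1 T2 hT x y A hA
end

section
/- Let t ≥ 2. There is no t-(v, t+1) trade T = {T_1, T_2} of volume s having an element x ∈ found(T) with r_x = 2^{t-1} < s such that λ_{xy} ≠ 0 for every y ∈ found(T) with y ≠ x. -/
namespace Trade

variable {α : Type} [DecidableEq α]

def derived (x : α) (T : Multiset (Finset α)) : Multiset (Finset α) :=
  (T.filter (x ∈ ·)).map (·.erase x)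

def residual (x : α) (T : Multiset (Finset α)) : Multiset (Finset α) :=
  T.filter (x ∉ ·)

variable {x : α} {T : Multiset (Finset α)}

theorem mem_derived {B : Finset α} :
    B ∈ derived x T ↔ ∃ C ∈ T, x ∈ C ∧ C.erase x = B := by
  simp [derived, and_assoc]

theorem card_derived : Multiset.card (derived x T) = rx T x := by
  rw [derived, Multiset.card_map, rx, Multiset.countP_eq_card_filter]

theorem countP_derived (p : Finset α → Prop) [DecidablePred p] :
    (derived x T).countP p = T.countP (fun B => x ∈ B ∧ p (B.erase x)) := by
  rw [derived, Multiset.countP_map, ← Multiset.countP_eq_card_filter, Multiset.countP_filter]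
  exact Multiset.countP_congr rfl fun B _ => propext and_comm

theorem rx_derived {y : α} (hyx : y ≠ x) : rx (derived x T) y = lamxy T x y := by
  rw [rx, countP_derived, lamxy]
  simp only [Finset.mem_erase, hyx, ne_eq, not_false_eq_true, true_and]

theorem countP_subset_derived {A : Finset α} (hxA : x ∉ A) :
    (derived x T).countP (A ⊆ ·) = T.countP (insert x A ⊆ ·) := by
  rw [countP_derived]
  refine Multiset.countP_congr rfl fun B _ => propext ?_
  rw [Finset.insert_subset_iff, Finset.subset_erase]
  simp [hxA]

theorem countP_subset_derived_of_mem {A : Finset α} (hxA : x ∈ A) :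
    (derived x T).countP (A ⊆ ·) = 0 := by
  rw [countP_derived, Multiset.countP_eq_zero]
  exact fun B _ h => Finset.notMem_erase x B (h.2 hxA)

theorem mem_residual {B : Finset α} : B ∈ residual x T ↔ B ∈ T ∧ x ∉ B :=
  Multiset.mem_filter

theorem card_eq_rx_add_card_residual :
    Multiset.card T = rx T x + Multiset.card (residual x T) := by
  rw [residual, ← Multiset.countP_eq_card_filter]
  exact Multiset.card_eq_countP_add_countP _ T

theorem countP_subset_eq_add_countP_subset_residual (A : Finset α) :
    T.countP (A ⊆ ·) = T.countP (insert x A ⊆ ·) + (residual x T).countP (A ⊆ ·) := by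
  rw [Multiset.countP_eq_countP_filter_add T _ (x ∈ ·), residual, Multiset.countP_filter]
  congr 1
  refine Multiset.countP_congr rfl fun B _ => propext ?_
  rw [Finset.insert_subset_iff, and_comm]

end Trade

section Foundation

variable {α : Type} [DecidableEq α] {T1 T2 : Multiset (Finset α)}

theorem mem_foundation {y : α} :
    y ∈ foundation T1 T2 ↔ ∃ B, (B ∈ T1 ∨ B ∈ T2) ∧ y ∈ B := by
  simp [foundation]

theorem subset_foundation_left {B : Finset α} (hB : B ∈ T1) : B ⊆ foundation T1 T2 :=
  fun _ hy => mem_foundation.mpr ⟨B, .inl hB, hy⟩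

theorem subset_foundation_right {B : Finset α} (hB : B ∈ T2) : B ⊆ foundation T1 T2 :=
  fun _ hy => mem_foundation.mpr ⟨B, .inr hB, hy⟩

theorem mem_foundation_of_rx_ne_zero {x : α} (hx : rx T1 x ≠ 0) : x ∈ foundation T1 T2 := by
  obtain ⟨B, hB, hxB⟩ := Multiset.countP_pos.mp (Nat.pos_of_ne_zero hx)
  exact subset_foundation_left hB hxB

theorem foundation_residual_subset {x : α} :
    foundation (Trade.residual x T1) (Trade.residual x T2) ⊆ foundation T1 T2 := by
  intro y hy
  obtain ⟨B, hB, hyB⟩ := mem_foundation.mp hy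
  exact mem_foundation.mpr
    ⟨B, hB.imp (Trade.mem_residual.mp · |>.1) (Trade.mem_residual.mp · |>.1), hyB⟩

theorem notMem_foundation_residual {x : α} :
    x ∉ foundation (Trade.residual x T1) (Trade.residual x T2) := by
  intro hx
  obtain ⟨B, hB | hB, hxB⟩ := mem_foundation.mp hx <;> exact (Trade.mem_residual.mp hB).2 hxB

end Foundation

theorem sum_countP_insert_subset {α : Type} [DecidableEq α] [Fintype α] {k : ℕ}
    (A : Finset α) (T : Multiset (Finset α)) (hT : ∀ B ∈ T, B.card = k) :
    ∑ y ∈ Aᶜ, T.countP (insert y A ⊆ ·) = (k - A.card) * T.countP (A ⊆ ·) := by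
  induction T using Multiset.induction with
  | empty => simp
  | cons B T ih =>
    simp only [Multiset.countP_cons, Finset.sum_add_distrib, mul_add,
      ih fun C hC => hT C (Multiset.mem_cons_of_mem hC)]
    congr 1
    by_cases hAB : A ⊆ B
    · have hfilter : Aᶜ.filter (insert · A ⊆ B) = B \ A := by
        ext y
        simp [Finset.insert_subset_iff, hAB, and_comm]
      rw [Finset.sum_boole, hfilter, Finset.card_sdiff_of_subset hAB,
        hT B (Multiset.mem_cons_self B T), if_pos hAB, mul_one, Nat.cast_id]
    · have hnot : ∀ y, ¬ insert y A ⊆ B := fun y h => hAB ((Finset.subset_insert y A).trans h)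
      simp [hAB, hnot]

theorem sum_countP_mem_eq_mul_card {α : Type} [DecidableEq α] {S : Finset α} {c : ℕ}
    (T : Multiset (Finset α)) (hT : ∀ B ∈ T, B ⊆ S ∧ B.card = c) :
    ∑ y ∈ S, T.countP (y ∈ ·) = c * Multiset.card T := by
  induction T using Multiset.induction with
  | empty => simp
  | cons B T ih =>
    obtain ⟨hBS, hBc⟩ := hT B (Multiset.mem_cons_self B T)
    simp only [Multiset.countP_cons, Multiset.card_cons, Finset.sum_add_distrib,
      ih fun C hC => hT C (Multiset.mem_cons_of_mem hC), Finset.sum_boole,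
      Finset.filter_mem_eq_inter, Finset.inter_eq_right.mpr hBS, hBc, Nat.cast_id, mul_add_one]

namespace IsTrade

variable {α : Type} [DecidableEq α] {t k : ℕ} {T1 T2 : Multiset (Finset α)}

theorem derived (h : IsTrade (t + 1) (k + 1) T1 T2) {x : α} (hx : rx T1 x ≠ 0) :
    IsTrade t k (Trade.derived x T1) (Trade.derived x T2) := by
  obtain ⟨h1, h2, h3, h4, h5⟩ := h
  have card_block {T : Multiset (Finset α)} (hT : ∀ B ∈ T, B.card = k + 1) :
      ∀ B ∈ Trade.derived x T, B.card = k := by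
    intro B hB
    obtain ⟨C, hC, hxC, rfl⟩ := Trade.mem_derived.mp hB
    rw [Finset.card_erase_of_mem hxC, hT C hC, Nat.add_sub_cancel]
  refine ⟨card_block h1, card_block h2, ?_, ?_, fun A hA => ?_⟩
  · intro B hB1 hB2
    obtain ⟨C1, hC1, hx1, rfl⟩ := Trade.mem_derived.mp hB1
    obtain ⟨C2, hC2, hx2, he⟩ := Trade.mem_derived.mp hB2
    rw [← Finset.insert_erase hx2, he, Finset.insert_erase hx1] at hC2
    exact h3 C1 hC1 hC2
  · rw [← Multiset.card_pos, Trade.card_derived]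
    exact Nat.pos_of_ne_zero hx
  · by_cases hxA : x ∈ A
    · rw [Trade.countP_subset_derived_of_mem hxA, Trade.countP_subset_derived_of_mem hxA]
    · rw [Trade.countP_subset_derived hxA, Trade.countP_subset_derived hxA]
      exact h5 _ (by rw [Finset.card_insert_of_notMem hxA, hA])

variable [Fintype α]

theorem of_succ (h : IsTrade (t + 1) k T1 T2) (hk : t < k) : IsTrade t k T1 T2 := by
  obtain ⟨h1, h2, h3, h4, h5⟩ := h
  refine ⟨h1, h2, h3, h4, fun A hA => Nat.eq_of_mul_eq_mul_left (Nat.sub_pos_of_lt hk) ?_⟩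
  rw [← hA, ← sum_countP_insert_subset A T1 h1, ← sum_countP_insert_subset A T2 h2]
  refine Finset.sum_congr rfl fun y hy => h5 _ ?_
  rw [Finset.card_insert_of_notMem (Finset.mem_compl.mp hy), hA]

theorem of_le {t' : ℕ} (h : IsTrade t k T1 T2) (ht' : t' ≤ t) (ht : t ≤ k) :
    IsTrade t' k T1 T2 := by
  induction t, ht' using Nat.le_induction with
  | base => exact h
  | succ n _ ih => exact ih (h.of_succ ht) (by omega)

theorem card_eq_s10 (h : IsTrade t k T1 T2) (ht : t ≤ k) :
    Multiset.card T1 = Multiset.card T2 := by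
  simpa using (h.of_le (Nat.zero_le t) ht).2.2.2.2 ∅ rfl

theorem rx_eq_s10 (h : IsTrade t k T1 T2) (ht : 1 ≤ t) (htk : t ≤ k) (x : α) :
    rx T1 x = rx T2 x := by
  simpa [rx] using (h.of_le ht htk).2.2.2.2 {x} rfl

theorem exists_mem_notMem (h : IsTrade t k T1 T2) (ht : t ≤ k) :
    ∃ B1 ∈ T1, ∃ B2 ∈ T2, ∃ x ∈ B1, x ∉ B2 := by
  obtain ⟨B1, hB1⟩ := Multiset.exists_mem_of_ne_zero h.2.2.2.1
  obtain ⟨B2, hB2⟩ := Multiset.card_pos_iff_exists_mem.mp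
    (h.card_eq_s10 ht ▸ Multiset.card_pos.mpr h.2.2.2.1)
  have hne : B1 ≠ B2 := fun he => h.2.2.1 B1 hB1 (he ▸ hB2)
  have hnsub : ¬ B1 ⊆ B2 := fun hsub =>
    hne (Finset.eq_of_subset_of_card_le hsub (by rw [h.1 B1 hB1, h.2.1 B2 hB2]))
  obtain ⟨x, hx1, hx2⟩ := Finset.not_subset.mp hnsub
  exact ⟨B1, hB1, B2, hB2, x, hx1, hx2⟩

theorem residual (h : IsTrade (t + 1) k T1 T2) (hk : t < k) {x : α}
    (hx : Trade.residual x T1 ≠ 0) :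
    IsTrade t k (Trade.residual x T1) (Trade.residual x T2) := by
  have h5' := (h.of_succ hk).2.2.2.2
  obtain ⟨h1, h2, h3, h4, h5⟩ := h
  refine ⟨fun B hB => h1 B (Trade.mem_residual.mp hB).1,
    fun B hB => h2 B (Trade.mem_residual.mp hB).1,
    fun B hB1 hB2 => h3 B (Trade.mem_residual.mp hB1).1 (Trade.mem_residual.mp hB2).1, hx,
    fun A hA => ?_⟩
  have hins : T1.countP (insert x A ⊆ ·) = T2.countP (insert x A ⊆ ·) := by
    by_cases hxA : x ∈ A
    · rw [Finset.insert_eq_of_mem hxA]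
      exact h5' A hA
    · exact h5 _ (by rw [Finset.card_insert_of_notMem hxA, hA])
  have e1 := Trade.countP_subset_eq_add_countP_subset_residual (x := x) (T := T1) A
  have e2 := Trade.countP_subset_eq_add_countP_subset_residual (x := x) (T := T2) A
  have := h5' A hA
  omega

theorem exists_rx_ne_zero_residual_ne_zero (h : IsTrade (t + 1) k T1 T2) (hk : t < k) :
    ∃ x, rx T1 x ≠ 0 ∧ Trade.residual x T1 ≠ 0 := by
  obtain ⟨B1, hB1, B2, hB2, x, hx1, hx2⟩ := h.exists_mem_notMem hk
  refine ⟨x, (Multiset.countP_pos.mpr ⟨B1, hB1, hx1⟩).ne', fun h0 => ?_⟩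
  have hres2 : 0 < Multiset.card (Trade.residual x T2) :=
    Multiset.card_pos_iff_exists_mem.mpr ⟨B2, Trade.mem_residual.mpr ⟨hB2, hx2⟩⟩
  have e1 := Trade.card_eq_rx_add_card_residual (x := x) (T := T1)
  have e2 := Trade.card_eq_rx_add_card_residual (x := x) (T := T2)
  rw [h0, Multiset.card_zero, h.card_eq_s10 hk, h.rx_eq_s10 (by omega) hk] at e1
  omega

theorem two_pow_le_card (h : IsTrade t k T1 T2) (hk : t < k) : 2 ^ t ≤ Multiset.card T1 := by
  induction t generalizing k T1 T2 with
  | zero => exact Multiset.card_pos.mpr h.2.2.2.1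
  | succ t ih =>
    obtain ⟨x, hx, hres⟩ := h.exists_rx_ne_zero_residual_ne_zero (by omega)
    obtain ⟨k, rfl⟩ : ∃ k', k = k' + 1 := ⟨k - 1, by omega⟩
    have hder := ih (h.derived hx) (by omega)
    have hresid := ih (h.residual (by omega) hres) (by omega)
    rw [Trade.card_derived] at hder
    rw [Trade.card_eq_rx_add_card_residual (x := x), pow_succ]
    omega

theorem add_add_one_le_card_foundation (h : IsTrade t k T1 T2) (ht : t ≤ k) :
    k + t + 1 ≤ (foundation T1 T2).card := by
  induction t generalizing T1 T2 with
  | zero =>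
    obtain ⟨B1, hB1, B2, hB2, x, hx1, hx2⟩ := h.exists_mem_notMem ht
    have hsub : insert x B2 ⊆ foundation T1 T2 :=
      Finset.insert_subset (subset_foundation_left hB1 hx1) (subset_foundation_right hB2)
    have := Finset.card_le_card hsub
    rwa [Finset.card_insert_of_notMem hx2, h.2.1 B2 hB2] at this
  | succ t ih =>
    obtain ⟨x, hx, hres⟩ := h.exists_rx_ne_zero_residual_ne_zero ht
    have hsub : insert x (foundation (Trade.residual x T1) (Trade.residual x T2))
        ⊆ foundation T1 T2 :=
      Finset.insert_subset (mem_foundation_of_rx_ne_zero hx) foundation_residual_subset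
    have := Finset.card_le_card hsub
    rw [Finset.card_insert_of_notMem notMem_foundation_residual] at this
    have := ih (h.residual ht hres) (by omega)
    omega

theorem two_pow_le_lamxy (h : IsTrade (t + 2) k T1 T2) (hk : t + 2 < k) {x y : α}
    (hyx : y ≠ x) (hxy : lamxy T1 x y ≠ 0) : 2 ^ t ≤ lamxy T1 x y := by
  obtain ⟨k, rfl⟩ : ∃ k', k = k' + 2 := ⟨k - 2, by omega⟩
  obtain ⟨B, hB, hxB, -⟩ := Multiset.countP_pos.mp (Nat.pos_of_ne_zero hxy)
  have hx : rx T1 x ≠ 0 := (Multiset.countP_pos.mpr ⟨B, hB, hxB⟩).ne'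
  have hy : rx (Trade.derived x T1) y ≠ 0 := by rwa [Trade.rx_derived hyx]
  have := ((h.derived hx).derived hy).two_pow_le_card (by omega)
  rwa [Trade.card_derived, Trade.rx_derived hyx] at this

end IsTrade

theorem sum_lamxy_erase {α : Type} [DecidableEq α] {k : ℕ} {T1 T2 : Multiset (Finset α)}
    (hT1 : ∀ B ∈ T1, B.card = k) (x : α) :
    ∑ y ∈ (foundation T1 T2).erase x, lamxy T1 x y = (k - 1) * rx T1 x := by
  have hblocks :
      ∀ B ∈ Trade.derived x T1, B ⊆ (foundation T1 T2).erase x ∧ B.card = k - 1 := by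
    intro B hB
    obtain ⟨C, hC, hxC, rfl⟩ := Trade.mem_derived.mp hB
    exact ⟨Finset.erase_subset_erase x (subset_foundation_left hC),
      by rw [Finset.card_erase_of_mem hxC, hT1 C hC]⟩
  rw [← Trade.card_derived, ← sum_countP_mem_eq_mul_card _ hblocks]
  exact Finset.sum_congr rfl fun y hy => (Trade.rx_derived (Finset.ne_of_mem_erase hy)).symm

theorem no_trade_with_all_lambda_nonzero_general (v t s : ℕ) (ht : 2 ≤ t) :
    ¬ ∃ (T1 T2 : Multiset (Finset (Fin v))) (x : Fin v),
        IsTrade t (t + 1) T1 T2 ∧ Multiset.card T1 = s ∧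
        x ∈ foundation T1 T2 ∧ rx T1 x = 2 ^ (t - 1) ∧ 2 ^ (t - 1) < s ∧
        ∀ y ∈ foundation T1 T2, y ≠ x → lamxy T1 x y ≠ 0 := by
  rintro ⟨T1, T2, x, hT, -, hxF, hrx, -, hlam⟩
  obtain ⟨m, rfl⟩ : ∃ m, t = m + 2 := ⟨t - 2, by omega⟩
  have hF := hT.add_add_one_le_card_foundation (by omega)
  set F := foundation T1 T2
  have hlam_ge : ∀ y ∈ F.erase x, 2 ^ m ≤ lamxy T1 x y := fun y hy =>
    hT.two_pow_le_lamxy (by omega) (Finset.ne_of_mem_erase hy)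
      (hlam y (Finset.mem_of_mem_erase hy) (Finset.ne_of_mem_erase hy))
  have hcount : (F.card - 1) * 2 ^ m ≤ (2 * m + 4) * 2 ^ m := calc
    (F.card - 1) * 2 ^ m = (F.erase x).card • 2 ^ m := by
      rw [Finset.card_erase_of_mem hxF, smul_eq_mul]
    _ ≤ ∑ y ∈ F.erase x, lamxy T1 x y := Finset.card_nsmul_le_sum _ _ _ hlam_ge
    _ = (m + 2) * 2 ^ (m + 1) := by rw [sum_lamxy_erase hT.1, hrx]; rfl
    _ = (2 * m + 4) * 2 ^ m := by ring
  have := Nat.le_of_mul_le_mul_right hcount (by positivity)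
  omega

/-- For `t ≥ 2`, there is no `t`-`(v, t+1)` trade of volume `s` having an element `x` of
the foundation with `r_x = 2^(t-1) < s` such that `λ_{xy} ≠ 0` for every `y ≠ x` in the
foundation. -/
theorem no_trade_with_all_lambda_nonzero (v t s : ℕ) (ht : 2 ≤ t) (hv : t + 1 < v) :
    ¬ ∃ (T1 T2 : Multiset (Finset (Fin v))) (x : Fin v),
        IsTrade t (t + 1) T1 T2 ∧ Multiset.card T1 = s ∧
        x ∈ foundation T1 T2 ∧ rx T1 x = 2 ^ (t - 1) ∧ 2 ^ (t - 1) < s ∧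
        ∀ y ∈ foundation T1 T2, y ≠ x → lamxy T1 x y ≠ 0 :=
  no_trade_with_all_lambda_nonzero_general v t s ht
end
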